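/- arXiv:2306.01474 — 2 statements merged into one kernel-verified Lean document; each statement's English description precedes it below -/
import Mathlib

section
/- (E(3)-invariance of the attention weights in the bilevel attention module.) In the bilevel attention setup, both the atom-level attentions α_j[p,q] = exp(R_j[p,q]) / ∑_{q'} exp(R_j[p,q']) and the block-level attentions β_j = exp(r_j) / ∑_{j'∈J} exp(r_{j'}), with r_j = (1/(nᵢ n_j)) ∑_{p,q} R_j[p,q] + e_j, are invariant under rigid motions: replacing every coordinate x by Q x + t, for any 3×3 real orthogonal matrix Q and t ∈ ℝ³ applied uniformly to all atoms of all blocks, leaves all α_j[p,q] and all β_j unchanged. -/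
open scoped BigOperators RealInnerProductSpace

/-- Atom-level correlation between block `i` and a neighbor block `j`:
`R[p,q] = (1/√d_r) ⟨W_Qᵀ hᵢ(p), W_Kᵀ h_j(q)⟩ + σ_D(‖xᵢ(p) − x_j(q)‖)`. -/
noncomputable def Rcorr {d dr ni nj : ℕ}
    (WQ WK : Matrix (Fin d) (Fin dr) ℝ) (σD : ℝ → ℝ)
    (hi : Fin ni → EuclideanSpace ℝ (Fin d)) (xi : Fin ni → EuclideanSpace ℝ (Fin 3))
    (hj : Fin nj → EuclideanSpace ℝ (Fin d)) (xj : Fin nj → EuclideanSpace ℝ (Fin 3))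
    (p : Fin ni) (q : Fin nj) : ℝ :=
  (1 / Real.sqrt dr) *
      ⟪Matrix.toEuclideanLin WQ.transpose (hi p),
        Matrix.toEuclideanLin WK.transpose (hj q)⟫
    + σD ‖xi p - xj q‖

/-- Atom-level cross attention `α[p,q] = exp(R[p,q]) / ∑_{q'} exp(R[p,q'])`. -/
noncomputable def alphaAtt {d dr ni nj : ℕ}
    (WQ WK : Matrix (Fin d) (Fin dr) ℝ) (σD : ℝ → ℝ)
    (hi : Fin ni → EuclideanSpace ℝ (Fin d)) (xi : Fin ni → EuclideanSpace ℝ (Fin 3))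
    (hj : Fin nj → EuclideanSpace ℝ (Fin d)) (xj : Fin nj → EuclideanSpace ℝ (Fin 3))
    (p : Fin ni) (q : Fin nj) : ℝ :=
  Real.exp (Rcorr WQ WK σD hi xi hj xj p q) /
    ∑ q' : Fin nj, Real.exp (Rcorr WQ WK σD hi xi hj xj p q')

/-- Block-level correlation `r_j = (1/(nᵢ n_j)) ∑_{p,q} R_j[p,q] + e_j`. -/
noncomputable def rBlock {d dr ni nj : ℕ}
    (WQ WK : Matrix (Fin d) (Fin dr) ℝ) (σD : ℝ → ℝ)
    (hi : Fin ni → EuclideanSpace ℝ (Fin d)) (xi : Fin ni → EuclideanSpace ℝ (Fin 3))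
    (hj : Fin nj → EuclideanSpace ℝ (Fin d)) (xj : Fin nj → EuclideanSpace ℝ (Fin 3))
    (ej : ℝ) : ℝ :=
  (1 / ((ni : ℝ) * (nj : ℝ))) *
      (∑ p : Fin ni, ∑ q : Fin nj, Rcorr WQ WK σD hi xi hj xj p q)
    + ej

/-- Block-level cross attention `β_j = exp(r_j) / ∑_{j'∈J} exp(r_{j'})`. -/
noncomputable def betaAtt {d dr ni : ℕ} {ι : Type*} [Fintype ι]
    (WQ WK : Matrix (Fin d) (Fin dr) ℝ) (σD : ℝ → ℝ)
    (hi : Fin ni → EuclideanSpace ℝ (Fin d)) (xi : Fin ni → EuclideanSpace ℝ (Fin 3))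
    (nb : ι → ℕ)
    (hb : ∀ j, Fin (nb j) → EuclideanSpace ℝ (Fin d))
    (xb : ∀ j, Fin (nb j) → EuclideanSpace ℝ (Fin 3))
    (e : ι → ℝ) (j : ι) : ℝ :=
  Real.exp (rBlock WQ WK σD hi xi (hb j) (xb j) (e j)) /
    ∑ j' : ι, Real.exp (rBlock WQ WK σD hi xi (hb j') (xb j') (e j'))

/-! Every score in the module sees the coordinates only through the distances `‖xᵢ(p) − x_j(q)‖`,
and `x ↦ Q x + t` with `Q` orthogonal is an isometry of `ℝ³`; so every `R_j[p,q]`, hence every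
`r_j`, `α_j[p,q]` and `β_j`, is unchanged. -/

theorem Matrix.norm_toEuclideanLin_of_mem_unitaryGroup {𝕜 n : Type*} [RCLike 𝕜] [Fintype n]
    [DecidableEq n] {U : Matrix n n 𝕜} (hU : U ∈ Matrix.unitaryGroup n 𝕜)
    (v : EuclideanSpace 𝕜 n) : ‖Matrix.toEuclideanLin U v‖ = ‖v‖ := by
  have hU' : Matrix.toEuclideanCLM (𝕜 := 𝕜) U ∈
      unitary (EuclideanSpace 𝕜 n →L[𝕜] EuclideanSpace 𝕜 n) :=
    Unitary.map_mem _ hU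
  exact ContinuousLinearMap.norm_map_of_mem_unitary hU' v

theorem Matrix.isometry_toEuclideanLin_add_const {𝕜 n : Type*} [RCLike 𝕜] [Fintype n]
    [DecidableEq n] {U : Matrix n n 𝕜} (hU : U ∈ Matrix.unitaryGroup n 𝕜)
    (t : EuclideanSpace 𝕜 n) : Isometry fun v => Matrix.toEuclideanLin U v + t :=
  (isometry_add_right t).comp <|
    AddMonoidHomClass.isometry_of_norm _ (Matrix.norm_toEuclideanLin_of_mem_unitaryGroup hU)

section IsometryInvariance

variable {d dr ni nj : ℕ} (WQ WK : Matrix (Fin d) (Fin dr) ℝ) (σD : ℝ → ℝ)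
  (hi : Fin ni → EuclideanSpace ℝ (Fin d)) (xi : Fin ni → EuclideanSpace ℝ (Fin 3))
  (hj : Fin nj → EuclideanSpace ℝ (Fin d)) (xj : Fin nj → EuclideanSpace ℝ (Fin 3))
  {g : EuclideanSpace ℝ (Fin 3) → EuclideanSpace ℝ (Fin 3)}

theorem Rcorr_comp_isometry (hg : Isometry g) (p : Fin ni) (q : Fin nj) :
    Rcorr WQ WK σD hi (g ∘ xi) hj (g ∘ xj) p q = Rcorr WQ WK σD hi xi hj xj p q := by
  simp only [Rcorr, Function.comp_apply, ← dist_eq_norm, hg.dist_eq]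

theorem alphaAtt_comp_isometry (hg : Isometry g) (p : Fin ni) (q : Fin nj) :
    alphaAtt WQ WK σD hi (g ∘ xi) hj (g ∘ xj) p q = alphaAtt WQ WK σD hi xi hj xj p q := by
  simp only [alphaAtt, Rcorr_comp_isometry WQ WK σD hi xi hj xj hg]

theorem rBlock_comp_isometry (hg : Isometry g) (ej : ℝ) :
    rBlock WQ WK σD hi (g ∘ xi) hj (g ∘ xj) ej = rBlock WQ WK σD hi xi hj xj ej := by
  simp only [rBlock, Rcorr_comp_isometry WQ WK σD hi xi hj xj hg]

theorem betaAtt_comp_isometry {ι : Type*} [Fintype ι] (nb : ι → ℕ)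
    (hb : ∀ j, Fin (nb j) → EuclideanSpace ℝ (Fin d))
    (xb : ∀ j, Fin (nb j) → EuclideanSpace ℝ (Fin 3)) (e : ι → ℝ) (hg : Isometry g) (j : ι) :
    betaAtt WQ WK σD hi (g ∘ xi) nb hb (fun j => g ∘ xb j) e j
      = betaAtt WQ WK σD hi xi nb hb xb e j := by
  simp only [betaAtt, fun j => rBlock_comp_isometry WQ WK σD hi xi (hb j) (xb j) hg]

end IsometryInvariance

theorem attention_weights_E3_invariant_general {d dr ni : ℕ} {ι : Type*} [Fintype ι]
    (nb : ι → ℕ)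
    (WQ WK : Matrix (Fin d) (Fin dr) ℝ) (σD : ℝ → ℝ)
    (hi : Fin ni → EuclideanSpace ℝ (Fin d)) (xi : Fin ni → EuclideanSpace ℝ (Fin 3))
    (hb : ∀ j, Fin (nb j) → EuclideanSpace ℝ (Fin d))
    (xb : ∀ j, Fin (nb j) → EuclideanSpace ℝ (Fin 3))
    (e : ι → ℝ)
    (Q : Matrix (Fin 3) (Fin 3) ℝ) (hQ : Q ∈ Matrix.orthogonalGroup (Fin 3) ℝ)
    (t : EuclideanSpace ℝ (Fin 3)) :
    (∀ (j : ι) (p : Fin ni) (q : Fin (nb j)),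
        alphaAtt WQ WK σD hi (fun p => Matrix.toEuclideanLin Q (xi p) + t)
            (hb j) (fun q => Matrix.toEuclideanLin Q (xb j q) + t) p q
          = alphaAtt WQ WK σD hi xi (hb j) (xb j) p q) ∧
    (∀ j : ι,
        betaAtt WQ WK σD hi (fun p => Matrix.toEuclideanLin Q (xi p) + t)
            nb hb (fun j q => Matrix.toEuclideanLin Q (xb j q) + t) e j
          = betaAtt WQ WK σD hi xi nb hb xb e j) := by
  have hg := Matrix.isometry_toEuclideanLin_add_const hQ t
  exact ⟨fun j p q => alphaAtt_comp_isometry WQ WK σD hi xi (hb j) (xb j) hg p q,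
    -- `(· :)` fixes `g` from `hg` before unifying `g ∘ xb j` with the lambda, which otherwise stalls
    fun j => (betaAtt_comp_isometry WQ WK σD hi xi nb hb xb e hg j :)⟩

theorem attention_weights_E3_invariant {d dr ni : ℕ} {ι : Type*} [Fintype ι] [Nonempty ι]
    (hni : 1 ≤ ni) (nb : ι → ℕ) (hnb : ∀ j, 1 ≤ nb j)
    (WQ WK : Matrix (Fin d) (Fin dr) ℝ) (σD : ℝ → ℝ)
    (hi : Fin ni → EuclideanSpace ℝ (Fin d)) (xi : Fin ni → EuclideanSpace ℝ (Fin 3))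
    (hb : ∀ j, Fin (nb j) → EuclideanSpace ℝ (Fin d))
    (xb : ∀ j, Fin (nb j) → EuclideanSpace ℝ (Fin 3))
    (e : ι → ℝ)
    (Q : Matrix (Fin 3) (Fin 3) ℝ) (hQ : Q ∈ Matrix.orthogonalGroup (Fin 3) ℝ)
    (t : EuclideanSpace ℝ (Fin 3)) :
    (∀ (j : ι) (p : Fin ni) (q : Fin (nb j)),
        alphaAtt WQ WK σD hi (fun p => Matrix.toEuclideanLin Q (xi p) + t)
            (hb j) (fun q => Matrix.toEuclideanLin Q (xb j q) + t) p q
          = alphaAtt WQ WK σD hi xi (hb j) (xb j) p q) ∧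
    (∀ j : ι,
        betaAtt WQ WK σD hi (fun p => Matrix.toEuclideanLin Q (xi p) + t)
            nb hb (fun j q => Matrix.toEuclideanLin Q (xb j q) + t) e j
          = betaAtt WQ WK σD hi xi nb hb xb e j) :=
  attention_weights_E3_invariant_general nb WQ WK σD hi xi hb xb e Q hQ t
end

section
/- (Lemma 4, feature part: intra-block permutation equivariance of the bilevel attention feature update.) In the bilevel attention setup, define h'ᵢ(p) = hᵢ(p) + ∑_{j∈J} β_j • φ_m(∑_q α_j[p,q] • (W_Vᵀ h_j(q))). Let τᵢ be a permutation of Fin nᵢ and, for each j ∈ J, let τ_j be a permutation of Fin n_j. Then the feature update computed from the permuted inputs hᵢ ∘ τᵢ, xᵢ ∘ τᵢ and h_j ∘ τ_j, x_j ∘ τ_j (for all j ∈ J, with the same e_j) equals h'ᵢ ∘ τᵢ. -/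
open scoped BigOperators RealInnerProductSpace

/-- Coordinate update of the bilevel attention module:
`x'ᵢ(p) = xᵢ(p) + ∑_{j∈J} β_j ∑_q α_j[p,q] · φ_X(R_j[p,q]) • (xᵢ(p) − x_j(q))`. -/
noncomputable def coordUpdate {d dr ni : ℕ} {ι : Type*} [Fintype ι]
    (WQ WK : Matrix (Fin d) (Fin dr) ℝ) (σD : ℝ → ℝ) (φX : ℝ → ℝ)
    (hi : Fin ni → EuclideanSpace ℝ (Fin d)) (xi : Fin ni → EuclideanSpace ℝ (Fin 3))
    (nb : ι → ℕ)
    (hb : ∀ j, Fin (nb j) → EuclideanSpace ℝ (Fin d))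
    (xb : ∀ j, Fin (nb j) → EuclideanSpace ℝ (Fin 3))
    (e : ι → ℝ) (p : Fin ni) : EuclideanSpace ℝ (Fin 3) :=
  xi p + ∑ j : ι, betaAtt WQ WK σD hi xi nb hb xb e j •
    ∑ q : Fin (nb j),
      (alphaAtt WQ WK σD hi xi (hb j) (xb j) p q *
        φX (Rcorr WQ WK σD hi xi (hb j) (xb j) p q)) • (xi p - xb j q)

/-- Feature update of the bilevel attention module:
`h'ᵢ(p) = hᵢ(p) + ∑_{j∈J} β_j • φ_m(∑_q α_j[p,q] • (W_Vᵀ h_j(q)))`. -/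
noncomputable def featUpdate {d dr dv ni : ℕ} {ι : Type*} [Fintype ι]
    (WQ WK : Matrix (Fin d) (Fin dr) ℝ) (WV : Matrix (Fin d) (Fin dv) ℝ)
    (σD : ℝ → ℝ) (φm : EuclideanSpace ℝ (Fin dv) → EuclideanSpace ℝ (Fin d))
    (hi : Fin ni → EuclideanSpace ℝ (Fin d)) (xi : Fin ni → EuclideanSpace ℝ (Fin 3))
    (nb : ι → ℕ)
    (hb : ∀ j, Fin (nb j) → EuclideanSpace ℝ (Fin d))
    (xb : ∀ j, Fin (nb j) → EuclideanSpace ℝ (Fin 3))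
    (e : ι → ℝ) (p : Fin ni) : EuclideanSpace ℝ (Fin d) :=
  hi p + ∑ j : ι, betaAtt WQ WK σD hi xi nb hb xb e j •
    φm (∑ q : Fin (nb j),
      alphaAtt WQ WK σD hi xi (hb j) (xb j) p q •
        Matrix.toEuclideanLin WV.transpose (hb j q))


/-! All attention quantities are built from the pairwise correlations `R[p, q]`, which
transform by composition with the permutations, through finite sums over the atoms of a block,
which are invariant under reindexing. So `α` is permuted along with the atoms, while the
block-level `r` and `β` do not change at all. -/

section PermInvariance

variable {d dr ni nj : ℕ} (WQ WK : Matrix (Fin d) (Fin dr) ℝ) (σD : ℝ → ℝ)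
  (hi : Fin ni → EuclideanSpace ℝ (Fin d)) (xi : Fin ni → EuclideanSpace ℝ (Fin 3))
  (hj : Fin nj → EuclideanSpace ℝ (Fin d)) (xj : Fin nj → EuclideanSpace ℝ (Fin 3))

theorem Rcorr_comp {m n : ℕ} (σ : Fin m → Fin ni) (τ : Fin n → Fin nj) (p : Fin m) (q : Fin n) :
    Rcorr WQ WK σD (hi ∘ σ) (xi ∘ σ) (hj ∘ τ) (xj ∘ τ) p q
      = Rcorr WQ WK σD hi xi hj xj (σ p) (τ q) :=
  rfl

theorem alphaAtt_comp {m : ℕ} (σ : Fin m → Fin ni) (τ : Equiv.Perm (Fin nj))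
    (p : Fin m) (q : Fin nj) :
    alphaAtt WQ WK σD (hi ∘ σ) (xi ∘ σ) (hj ∘ τ) (xj ∘ τ) p q
      = alphaAtt WQ WK σD hi xi hj xj (σ p) (τ q) := by
  simp only [alphaAtt, Rcorr_comp]
  rw [Equiv.sum_comp τ fun q' => Real.exp (Rcorr WQ WK σD hi xi hj xj (σ p) q')]

theorem rBlock_comp_perm (σ : Equiv.Perm (Fin ni)) (τ : Equiv.Perm (Fin nj)) (ej : ℝ) :
    rBlock WQ WK σD (hi ∘ σ) (xi ∘ σ) (hj ∘ τ) (xj ∘ τ) ej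
      = rBlock WQ WK σD hi xi hj xj ej := by
  simp only [rBlock, Rcorr_comp, Equiv.sum_comp]
  rw [Equiv.sum_comp σ fun p => ∑ q, Rcorr WQ WK σD hi xi hj xj p q]

theorem betaAtt_comp_perm {ι : Type*} [Fintype ι] (nb : ι → ℕ)
    (hb : ∀ j, Fin (nb j) → EuclideanSpace ℝ (Fin d))
    (xb : ∀ j, Fin (nb j) → EuclideanSpace ℝ (Fin 3)) (e : ι → ℝ)
    (σ : Equiv.Perm (Fin ni)) (τb : ∀ j, Equiv.Perm (Fin (nb j))) (j : ι) :
    betaAtt WQ WK σD (hi ∘ σ) (xi ∘ σ) nb (fun j => hb j ∘ τb j) (fun j => xb j ∘ τb j) e j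
      = betaAtt WQ WK σD hi xi nb hb xb e j := by
  simp only [betaAtt, rBlock_comp_perm]

end PermInvariance

theorem featUpdate_perm_equivariant_general {d dr dv ni : ℕ} {ι : Type*} [Fintype ι]
    (nb : ι → ℕ)
    (WQ WK : Matrix (Fin d) (Fin dr) ℝ) (WV : Matrix (Fin d) (Fin dv) ℝ)
    (σD : ℝ → ℝ) (φm : EuclideanSpace ℝ (Fin dv) → EuclideanSpace ℝ (Fin d))
    (hi : Fin ni → EuclideanSpace ℝ (Fin d)) (xi : Fin ni → EuclideanSpace ℝ (Fin 3))
    (hb : ∀ j, Fin (nb j) → EuclideanSpace ℝ (Fin d))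
    (xb : ∀ j, Fin (nb j) → EuclideanSpace ℝ (Fin 3))
    (e : ι → ℝ)
    (τi : Equiv.Perm (Fin ni)) (τb : ∀ j : ι, Equiv.Perm (Fin (nb j))) :
    featUpdate WQ WK WV σD φm (hi ∘ τi) (xi ∘ τi)
        nb (fun j => hb j ∘ τb j) (fun j => xb j ∘ τb j) e
      = (featUpdate WQ WK WV σD φm hi xi nb hb xb e) ∘ τi := by
  funext p
  simp only [featUpdate, Function.comp_apply, betaAtt_comp_perm, alphaAtt_comp]
  congr 1
  refine Finset.sum_congr rfl fun j _ => ?_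
  rw [Equiv.sum_comp (τb j) fun q =>
    alphaAtt WQ WK σD hi xi (hb j) (xb j) (τi p) q • Matrix.toEuclideanLin WV.transpose (hb j q)]

theorem featUpdate_perm_equivariant {d dr dv ni : ℕ} {ι : Type*} [Fintype ι] [Nonempty ι]
    (hni : 1 ≤ ni) (nb : ι → ℕ) (hnb : ∀ j, 1 ≤ nb j)
    (WQ WK : Matrix (Fin d) (Fin dr) ℝ) (WV : Matrix (Fin d) (Fin dv) ℝ)
    (σD : ℝ → ℝ) (φm : EuclideanSpace ℝ (Fin dv) → EuclideanSpace ℝ (Fin d))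
    (hi : Fin ni → EuclideanSpace ℝ (Fin d)) (xi : Fin ni → EuclideanSpace ℝ (Fin 3))
    (hb : ∀ j, Fin (nb j) → EuclideanSpace ℝ (Fin d))
    (xb : ∀ j, Fin (nb j) → EuclideanSpace ℝ (Fin 3))
    (e : ι → ℝ)
    (τi : Equiv.Perm (Fin ni)) (τb : ∀ j : ι, Equiv.Perm (Fin (nb j))) :
    featUpdate WQ WK WV σD φm (hi ∘ τi) (xi ∘ τi)
        nb (fun j => hb j ∘ τb j) (fun j => xb j ∘ τb j) e
      = (featUpdate WQ WK WV σD φm hi xi nb hb xb e) ∘ τi :=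
  featUpdate_perm_equivariant_general nb WQ WK WV σD φm hi xi hb xb e τi τb
end
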